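/- Let A = [[A_c, C_cp], [C_pc, A_p]] with C_pc = C_cpᵀ be a real symmetric positive definite block matrix, let S be a real symmetric positive definite m×m matrix, let G = [G_c G_p] be a real m×(c+p) matrix in conformal column blocks, and define the residual matrix G_r = G_p − G_c A_c⁻¹ C_cp. Then Tr[S⁻¹ G A⁻¹ Gᵀ] − Tr[S⁻¹ G_c A_c⁻¹ G_cᵀ] ≥ Tr[S⁻¹ G_r A_p⁻¹ G_rᵀ]. -/

import Mathlib

/-!
The block-inversion formula pivoting on `A_c` gives
`G A⁻¹ Gᵀ = G_c A_c⁻¹ G_cᵀ + G_r Â_p⁻¹ G_rᵀ`, so `Δη = Tr[S⁻¹ G_r Â_p⁻¹ G_rᵀ]`.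
By the Woodbury identity, `Â_p⁻¹ - A_p⁻¹ = A_p⁻¹ C_pc (A_c - C_cp A_p⁻¹ C_pc)⁻¹ C_cp A_p⁻¹`
is a congruence of the inverse of the other Schur complement, hence positive semidefinite,
and `X ↦ Tr[S⁻¹ X]` is monotone in the Loewner order because `S⁻¹` is positive definite.
-/

open Matrix
open scoped ComplexOrder

namespace Matrix

section Algebra

variable {α : Type*} [CommRing α] {k l m n : Type*} [Fintype m] [Fintype n]
  [DecidableEq m] [DecidableEq n]

theorem fromCols_mul_inv_fromBlocks_mul_fromRows (A : Matrix m m α) (B : Matrix m n α)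
    (C : Matrix n m α) (D : Matrix n n α) (H₁ : Matrix l m α) (H₂ : Matrix l n α)
    (K₁ : Matrix m k α) (K₂ : Matrix n k α) (hA : IsUnit A) (hS : IsUnit (D - C * A⁻¹ * B)) :
    fromCols H₁ H₂ * (fromBlocks A B C D)⁻¹ * fromRows K₁ K₂ =
      H₁ * A⁻¹ * K₁ + (H₂ - H₁ * A⁻¹ * B) * (D - C * A⁻¹ * B)⁻¹ * (K₂ - C * A⁻¹ * K₁) := by
  let := hA.invertible
  obtain ⟨_⟩ : Nonempty (Invertible (D - C * ⅟A * B)) := by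
    rw [invOf_eq_nonsing_inv]; exact hS.nonempty_invertible
  let := fromBlocks₁₁Invertible A B C D
  rw [← invOf_eq_nonsing_inv (fromBlocks A B C D), invOf_fromBlocks₁₁_eq]
  simp only [invOf_eq_nonsing_inv, fromCols_mul_fromBlocks, fromCols_mul_fromRows,
    Matrix.mul_add, Matrix.add_mul, Matrix.sub_mul, Matrix.mul_sub, Matrix.neg_mul,
    Matrix.mul_neg, Matrix.mul_assoc]
  abel

theorem sub_mul_inv_mul_inv_eq_add (A : Matrix m m α) (B : Matrix m n α) (C : Matrix n m α)
    (D : Matrix n n α) (hA : IsUnit A) (hD : IsUnit D) (hS : IsUnit (A - B * D⁻¹ * C)) :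
    (D - C * A⁻¹ * B)⁻¹ = D⁻¹ + D⁻¹ * C * (A - B * D⁻¹ * C)⁻¹ * B * D⁻¹ := by
  rw [sub_eq_add_neg, ← Matrix.neg_mul, ← Matrix.neg_mul,
    add_mul_mul_inv_eq_sub D (-C) A⁻¹ B hD (isUnit_nonsing_inv_iff.mpr hA)] <;>
    rw [nonsing_inv_nonsing_inv A ((isUnit_iff_isUnit_det A).mp hA)]
  · simp only [Matrix.mul_neg, Matrix.neg_mul, ← sub_eq_add_neg, sub_neg_eq_add]
  · rwa [Matrix.mul_neg, ← sub_eq_add_neg]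

end Algebra

variable {𝕜 : Type*} [RCLike 𝕜] {l m n : Type*} [Fintype m] [Fintype n]
  [DecidableEq m] [DecidableEq n]

theorem PosSemidef.trace_mul_nonneg {P Q : Matrix n n 𝕜} (hP : P.PosSemidef) (hQ : Q.PosSemidef) :
    0 ≤ (P * Q).trace := by
  open scoped MatrixOrder Matrix.Norms.L2Operator in
  obtain ⟨B, rfl⟩ := CStarAlgebra.nonneg_iff_eq_star_mul_self.mp hP.nonneg
  rw [Matrix.mul_assoc, Matrix.trace_mul_comm]
  exact (hQ.mul_mul_conjTranspose_same B).trace_nonneg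

theorem PosSemidef.trace_mul_le_trace_mul {P Q R : Matrix n n 𝕜} (hP : P.PosSemidef)
    (hQR : (R - Q).PosSemidef) : (P * Q).trace ≤ (P * R).trace := by
  simpa only [Matrix.mul_sub, trace_sub, sub_nonneg] using hP.trace_mul_nonneg hQR

variable {A : Matrix m m 𝕜} {B : Matrix m n 𝕜} {D : Matrix n n 𝕜}

omit [Fintype m] [Fintype n] [DecidableEq m] [DecidableEq n] in
theorem PosDef.of_fromBlocks₁₁ (hM : (fromBlocks A B Bᴴ D).PosDef) : A.PosDef :=
  hM.submatrix Sum.inl_injective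

omit [Fintype m] [Fintype n] [DecidableEq m] [DecidableEq n] in
theorem PosDef.of_fromBlocks₂₂ (hM : (fromBlocks A B Bᴴ D).PosDef) : D.PosDef :=
  hM.submatrix Sum.inr_injective

theorem PosDef.isUnit_schur₁₁ (hM : (fromBlocks A B Bᴴ D).PosDef) :
    IsUnit (D - Bᴴ * A⁻¹ * B) := by
  let := hM.of_fromBlocks₁₁.isUnit.invertible
  simpa using isUnit_fromBlocks_iff_of_invertible₁₁.mp hM.isUnit

theorem PosDef.posSemidef_inv_schur_sub_inv (hM : (fromBlocks A B Bᴴ D).PosDef) :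
    ((D - Bᴴ * A⁻¹ * B)⁻¹ - D⁻¹).PosSemidef := by
  have hD := hM.of_fromBlocks₂₂
  let := hD.isUnit.invertible
  have hS : (A - B * D⁻¹ * Bᴴ).PosSemidef := by
    simpa using (PosDef.fromBlocks₂₂ A B hD).mp hM.posSemidef
  have hSunit : IsUnit (A - B * D⁻¹ * Bᴴ) := by
    simpa using isUnit_fromBlocks_iff_of_invertible₂₂.mp hM.isUnit
  rw [sub_mul_inv_mul_inv_eq_add A B Bᴴ D hM.of_fromBlocks₁₁.isUnit hD.isUnit hSunit,
    add_sub_cancel_left]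
  have := hS.inv.conjTranspose_mul_mul_same (B * D⁻¹)
  simpa [conjTranspose_mul, hD.1.inv.eq, Matrix.mul_assoc] using this

theorem PosDef.fromCols_mul_inv_mul_conjTranspose (hM : (fromBlocks A B Bᴴ D).PosDef)
    (G₁ : Matrix l m 𝕜) (G₂ : Matrix l n 𝕜) :
    fromCols G₁ G₂ * (fromBlocks A B Bᴴ D)⁻¹ * (fromCols G₁ G₂)ᴴ =
      G₁ * A⁻¹ * G₁ᴴ + (G₂ - G₁ * A⁻¹ * B) * (D - Bᴴ * A⁻¹ * B)⁻¹ * (G₂ - G₁ * A⁻¹ * B)ᴴ := by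
  have hA := hM.of_fromBlocks₁₁
  rw [conjTranspose_fromCols_eq_fromRows_conjTranspose,
    fromCols_mul_inv_fromBlocks_mul_fromRows _ _ _ _ _ _ _ _ hA.isUnit hM.isUnit_schur₁₁]
  simp only [conjTranspose_sub, conjTranspose_mul, hA.1.inv.eq, Matrix.mul_assoc]

end Matrix

/-- Paper's Theorem 2 (full form): the increase `Δη` in natural expansion score due to
adding proposed neurons is bounded below by the cheap estimate `Δη'`:
`Tr[S⁻¹ G A⁻¹ Gᵀ] − Tr[S⁻¹ G_c A_c⁻¹ G_cᵀ] ≥ Tr[S⁻¹ G_r A_p⁻¹ G_rᵀ]`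
where `A = [[A_c, C_cp], [C_cpᵀ, A_p]]` is symmetric positive definite, `S` is symmetric
positive definite, `G = [G_c G_p]` and `G_r = G_p − G_c A_c⁻¹ C_cp`. -/
theorem delta_eta_lower_bound {m c p : ℕ}
    (Ac : Matrix (Fin c) (Fin c) ℝ) (Ccp : Matrix (Fin c) (Fin p) ℝ)
    (Ap : Matrix (Fin p) (Fin p) ℝ)
    (hA : (Matrix.fromBlocks Ac Ccp Ccpᵀ Ap).PosDef)
    (S : Matrix (Fin m) (Fin m) ℝ) (hS : S.PosDef)
    (Gc : Matrix (Fin m) (Fin c) ℝ) (Gp : Matrix (Fin m) (Fin p) ℝ) :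
    (S⁻¹ * (Gp - Gc * Ac⁻¹ * Ccp) * Ap⁻¹ * (Gp - Gc * Ac⁻¹ * Ccp)ᵀ).trace ≤
      (S⁻¹ * Matrix.fromCols Gc Gp * (Matrix.fromBlocks Ac Ccp Ccpᵀ Ap)⁻¹ *
          (Matrix.fromCols Gc Gp)ᵀ).trace
        - (S⁻¹ * Gc * Ac⁻¹ * Gcᵀ).trace := by
  simp only [← conjTranspose_eq_transpose_of_trivial] at hA ⊢
  have hdecomp := hA.fromCols_mul_inv_mul_conjTranspose Gc Gp
  set Gr := Gp - Gc * Ac⁻¹ * Ccp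
  have hmono : (S⁻¹ * (Gr * Ap⁻¹ * Grᴴ)).trace ≤
      (S⁻¹ * (Gr * (Ap - Ccpᴴ * Ac⁻¹ * Ccp)⁻¹ * Grᴴ)).trace := by
    refine hS.inv.posSemidef.trace_mul_le_trace_mul ?_
    simpa only [Matrix.mul_sub, Matrix.sub_mul] using
      hA.posSemidef_inv_schur_sub_inv.mul_mul_conjTranspose_same Gr
  simp only [Matrix.mul_assoc] at hdecomp hmono ⊢
  rw [hdecomp, Matrix.mul_add, trace_add]
  linarith
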